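/- arXiv:1208.5579 — 8 statements merged into one kernel-verified Lean document; each statement's English description precedes it below -/
import Mathlib

section
/- In every F-semilattice A, every unary term operation t_A : A → A is an endomorphism of A; consequently, for any two unary terms s and t, the identity s(t(x)) = t(s(x)) holds in all F-semilattices. -/
inductive SLTerm (F : Type) : Type where
  | var : SLTerm F
  | meet : SLTerm F → SLTerm F → SLTerm F
  | act : F → SLTerm F → SLTerm F

/-- Evaluation of a unary term at an element of an `F`-semilattice. -/
def SLTerm.eval {F A : Type} [SemilatticeInf A] [SMul F A] : SLTerm F → A → A
  | .var, a => a
  | .meet s t, a => s.eval a ⊓ t.eval a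
  | .act g t, a => g • t.eval a

inductive SLTermN (F : Type) : Type where
  | var : ℕ → SLTermN F
  | meet : SLTermN F → SLTermN F → SLTermN F
  | act : F → SLTermN F → SLTermN F

def SLTermN.eval {F A : Type} [SemilatticeInf A] [SMul F A] : SLTermN F → (ℕ → A) → A
  | .var n, v => v n
  | .meet s t, v => s.eval v ⊓ t.eval v
  | .act g t, v => g • t.eval v

def SatQI (F : Type) (A : Type) [SemilatticeInf A] [SMul F A]
    (prem : List (SLTermN F × SLTermN F)) (c : SLTermN F × SLTermN F) : Prop :=
  ∀ v : ℕ → A, (∀ p ∈ prem, p.1.eval v = p.2.eval v) → c.1.eval v = c.2.eval v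

/-- `B` belongs to the quasivariety generated by `A`. -/
def InQ (F : Type) (A B : Type) [SemilatticeInf A] [SMul F A]
    [SemilatticeInf B] [SMul F B] : Prop :=
  ∀ prem c, SatQI F A prem c → SatQI F B prem c

/-- `B` belongs to the variety generated by `A`. -/
def InV (F : Type) (A B : Type) [SemilatticeInf A] [SMul F A]
    [SemilatticeInf B] [SMul F B] : Prop :=
  ∀ s t : SLTermN F, (∀ v : ℕ → A, s.eval v = t.eval v) → ∀ v : ℕ → B, s.eval v = t.eval v

def IsHom (F : Type) {A B : Type} [SemilatticeInf A] [SMul F A] [SemilatticeInf B] [SMul F B]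
    (φ : A → B) : Prop :=
  (∀ x y : A, φ (x ⊓ y) = φ x ⊓ φ y) ∧ ∀ (g : F) (x : A), φ (g • x) = g • φ x

/-- The subuniverse of `A` generated by `a`. -/
def genSet (F : Type) {A : Type} [SemilatticeInf A] [SMul F A] (a : A) : Set A :=
  Set.range fun t : SLTerm F => t.eval a

/-- The quasivariety generated by `A` is a minimal quasivariety of `F`-semilattices. -/
def MinGen (F : Type) [CommGroup F] (A : Type) [SemilatticeInf A] [MulAction F A] : Prop :=
  Nontrivial A ∧
    ∀ (B : Type) [SemilatticeInf B] [MulAction F B],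
      (∀ (g : F) (x y : B), g • (x ⊓ y) = g • x ⊓ g • y) →
      InQ F A B → Nontrivial B → InQ F B A

/-! A unary term operation is built from the identity by the `F`-actions and pointwise meets. All of these are
endomorphisms: the actions because `F` is abelian, and a pointwise meet of endomorphisms because `⊓` is
associative and commutative. Term operations commute with homomorphisms, in particular with
each other. -/

namespace SLTerm

variable {F A : Type} [SemilatticeInf A] [SMul F A]

theorem eval_inf (hA : ∀ (g : F) (x y : A), g • (x ⊓ y) = g • x ⊓ g • y) (t : SLTerm F) (x y : A) :
    t.eval (x ⊓ y) = t.eval x ⊓ t.eval y := by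
  induction t with
  | var => rfl
  | meet s t ihs iht => simp only [eval, ihs, iht, inf_inf_inf_comm]
  | act g t ih => simp only [eval, ih, hA]

theorem eval_smul [SMulCommClass F F A] (hA : ∀ (g : F) (x y : A), g • (x ⊓ y) = g • x ⊓ g • y)
    (t : SLTerm F) (g : F) (x : A) : t.eval (g • x) = g • t.eval x := by
  induction t with
  | var => rfl
  | meet s t ihs iht => simp only [eval, ihs, iht, hA]
  | act f t ih => simp only [eval, ih, smul_comm f g]

theorem isHom_eval [SMulCommClass F F A] (hA : ∀ (g : F) (x y : A), g • (x ⊓ y) = g • x ⊓ g • y)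
    (t : SLTerm F) : IsHom F (t.eval : A → A) :=
  ⟨t.eval_inf hA, t.eval_smul hA⟩

theorem eval_comp_hom {B : Type} [SemilatticeInf B] [SMul F B] {φ : A → B} (hφ : IsHom F φ)
    (t : SLTerm F) (x : A) : t.eval (φ x) = φ (t.eval x) := by
  induction t with
  | var => rfl
  | meet s t ihs iht => simp only [eval, ihs, iht, hφ.1]
  | act g t ih => simp only [eval, ih, hφ.2]

end SLTerm

/-- Every unary term operation is an endomorphism, and any two unary term operations commute. -/
theorem stmt_1 (F : Type) [CommGroup F] (A : Type) [SemilatticeInf A] [MulAction F A]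
    (hA : ∀ (g : F) (x y : A), g • (x ⊓ y) = g • x ⊓ g • y) (t : SLTerm F) :
    (∀ x y : A, t.eval (x ⊓ y) = t.eval x ⊓ t.eval y) ∧
    (∀ (g : F) (x : A), t.eval (g • x) = g • t.eval x) ∧
    (∀ (s : SLTerm F) (x : A), s.eval (t.eval x) = t.eval (s.eval x)) := by
  have ht := t.isHom_eval hA
  exact ⟨ht.1, ht.2, fun s => s.eval_comp_hom ht⟩
end

section
/- Let A be an F-semilattice generated by a single element a. If s₁ and s₂ are unary terms with s₁(a) = s₂(a), then the identity s₁(x) = s₂(x) holds in A (and hence in the variety generated by A). -/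
/-- Interpreting a unary term as a term in the variables `0, 1, 2, …` (using variable `0`). -/
def SLTerm.toN {F : Type} : SLTerm F → SLTermN F
  | .var => .var 0
  | .meet s t => .meet s.toN t.toN
  | .act g t => .act g t.toN

/-!
Since `F` is abelian and acts by automorphisms, every term operation `x ↦ t(x)` is an
endomorphism of `A`, and endomorphisms commute with term operations. Writing `x = t(a)`,
this gives `s₁(x) = t(s₁(a)) = t(s₂(a)) = s₂(x)`; an identity of `A` then passes to every
member of the variety it generates.
-/

lemma IsHom.eval_comm {F A B : Type} [SemilatticeInf A] [SMul F A] [SemilatticeInf B] [SMul F B]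
    {φ : A → B} (hφ : IsHom F φ) (t : SLTerm F) (x : A) : φ (t.eval x) = t.eval (φ x) := by
  induction t with
  | var => rfl
  | meet s u hs hu => simp only [SLTerm.eval, hφ.1, hs, hu]
  | act g u hu => simp only [SLTerm.eval, hφ.2, hu]

lemma SLTerm.isHom_eval_s4 {F A : Type} [CommMonoid F] [SemilatticeInf A] [MulAction F A]
    (hA : ∀ (g : F) (x y : A), g • (x ⊓ y) = g • x ⊓ g • y) (t : SLTerm F) :
    IsHom F (t.eval : A → A) := by
  induction t with
  | var => exact ⟨fun _ _ => rfl, fun _ _ => rfl⟩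
  | meet s u hs hu =>
    refine ⟨fun x y => ?_, fun g x => ?_⟩
    · simp only [SLTerm.eval, hs.1, hu.1, inf_inf_inf_comm]
    · simp only [SLTerm.eval, hs.2, hu.2, hA]
  | act h u hu =>
    refine ⟨fun x y => ?_, fun g x => ?_⟩
    · simp only [SLTerm.eval, hu.1, hA]
    · simp only [SLTerm.eval, hu.2, smul_smul, mul_comm]

lemma SLTerm.toN_eval {F A : Type} [SemilatticeInf A] [SMul F A]
    (t : SLTerm F) (v : ℕ → A) : t.toN.eval v = t.eval (v 0) := by
  induction t with
  | var => rfl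
  | meet s u hs hu => simp only [SLTerm.toN, SLTermN.eval, SLTerm.eval, hs, hu]
  | act g u hu => simp only [SLTerm.toN, SLTermN.eval, SLTerm.eval, hu]

lemma InV.eval_eq {F A B : Type} [SemilatticeInf A] [SMul F A] [SemilatticeInf B] [SMul F B]
    (hV : InV F A B) {s₁ s₂ : SLTerm F} (h : ∀ x : A, s₁.eval x = s₂.eval x) (x : B) :
    s₁.eval x = s₂.eval x := by
  simpa only [SLTerm.toN_eval] using
    hV s₁.toN s₂.toN (fun v => by simp only [SLTerm.toN_eval, h]) (fun _ => x)

/-- If `A` is generated by `a` and `s₁(a) = s₂(a)`, then `s₁(x) = s₂(x)` holds in `A`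
and hence in the variety generated by `A`. -/
theorem stmt_4 (F : Type) [CommGroup F] (A : Type) [SemilatticeInf A] [MulAction F A]
    (hA : ∀ (g : F) (x y : A), g • (x ⊓ y) = g • x ⊓ g • y)
    (a : A) (hgen : ∀ x : A, ∃ t : SLTerm F, t.eval a = x)
    (s₁ s₂ : SLTerm F) (h : s₁.eval a = s₂.eval a) :
    (∀ x : A, s₁.eval x = s₂.eval x) ∧
    (∀ (B : Type) [SemilatticeInf B] [MulAction F B],
      InV F A B → ∀ x : B, s₁.eval x = s₂.eval x) := by
  have hIdentity : ∀ x : A, s₁.eval x = s₂.eval x := by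
    intro x
    obtain ⟨t, rfl⟩ := hgen x
    rw [(s₁.isHom_eval_s4 hA).eval_comm, h, ← (s₂.isHom_eval_s4 hA).eval_comm]
  exact ⟨hIdentity, fun B _ _ hV => hV.eval_eq hIdentity⟩
end

section
/- If A is a 1-generated F-semilattice and {d} is a one-element subalgebra of A (so d ∧ d = d and g(d) = d for all g ∈ F), then d is the least element of A. -/
/-! A term in the generator `a` is a meet of translates of `a`, so each element lies below some
`g • a`. A fixed point `d` below `g • a` lies below `a` (translate by `g⁻¹`), hence below every
translate of `a`, hence below every element. -/

section

variable {F A : Type} [SemilatticeInf A]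

theorem monotone_smul_of_smul_inf [SMul F A] (hA : ∀ (g : F) (x y : A), g • (x ⊓ y) = g • x ⊓ g • y)
    (g : F) : Monotone fun x : A => g • x := by
  intro x y hxy
  have h := hA g x y
  rw [inf_eq_left.2 hxy] at h
  exact inf_eq_left.1 h.symm

variable [Monoid F] [MulAction F A] (hmono : ∀ g : F, Monotone fun x : A => g • x)
include hmono

theorem SLTerm.exists_eval_le_smul (a : A) (t : SLTerm F) : ∃ g : F, t.eval a ≤ g • a := by
  induction t with
  | var => exact ⟨1, (one_smul F a).ge⟩
  | meet _ _ ihs _ =>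
    obtain ⟨g, hg⟩ := ihs
    exact ⟨g, inf_le_left.trans hg⟩
  | act h _ iht =>
    obtain ⟨g, hg⟩ := iht
    exact ⟨h * g, (hmono h hg).trans_eq (smul_smul h g a)⟩

theorem SLTerm.le_eval_of_le {a d : A} (hd : ∀ g : F, g • d = d) (hda : d ≤ a) (t : SLTerm F) :
    d ≤ t.eval a := by
  induction t with
  | var => exact hda
  | meet _ _ ihs iht => exact le_inf ihs iht
  | act g _ iht => exact (hd g).ge.trans (hmono g iht)

end

theorem SLTerm.le_of_eval_eq_of_fixed {F A : Type} [Group F] [SemilatticeInf A] [MulAction F A]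
    (hmono : ∀ g : F, Monotone fun x : A => g • x) {a d : A} (hd : ∀ g : F, g • d = d)
    {t : SLTerm F} (ht : t.eval a = d) : d ≤ a := by
  obtain ⟨g, hg⟩ := t.exists_eval_le_smul hmono a
  have h := hmono g⁻¹ (ht ▸ hg)
  simpa only [hd, inv_smul_smul] using h

theorem stmt_7_general (F : Type) [CommGroup F] (A : Type) [SemilatticeInf A] [MulAction F A]
    (hA : ∀ (g : F) (x y : A), g • (x ⊓ y) = g • x ⊓ g • y)
    (a : A) (hgen : ∀ x : A, ∃ t : SLTerm F, t.eval a = x)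
    (d : A) (hd : ∀ g : F, g • d = d) :
    ∀ x : A, d ≤ x := by
  have hmono := monotone_smul_of_smul_inf hA
  obtain ⟨t, ht⟩ := hgen d
  have hda : d ≤ a := SLTerm.le_of_eval_eq_of_fixed hmono hd ht
  intro x
  obtain ⟨s, rfl⟩ := hgen x
  exact s.le_eval_of_le hmono hd hda

/-- If `{d}` is a one-element subalgebra of a `1`-generated `F`-semilattice `A`,
then `d` is the least element of `A`. -/
theorem stmt_7 (F : Type) [CommGroup F] (A : Type) [SemilatticeInf A] [MulAction F A]
    (hA : ∀ (g : F) (x y : A), g • (x ⊓ y) = g • x ⊓ g • y)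
    (a : A) (hgen : ∀ x : A, ∃ t : SLTerm F, t.eval a = x)
    (d : A) (hd_inf : d ⊓ d = d) (hd : ∀ g : F, g • d = d) :
    ∀ x : A, d ≤ x :=
  stmt_7_general F A hA a hgen d hd
end

section
/- For a subgroup H of an abelian group F, the Maróti semilattice M(H,F) — whose universe is {∅} ∪ {gH : g ∈ F}, with meet given by intersection and with f acting by f(gH) = fgH and f(∅) = ∅ — is an F-semilattice, and if H is a proper subgroup then M(H,F) is generated by each of its nonzero elements; consequently M(H,F) generates a minimal quasivariety of F-semilattices. -/
open Pointwise

/-- The universe of the Maróti semilattice: the empty set together with all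
left cosets of `H`. -/
def Maroti (F : Type) [CommGroup F] (H : Subgroup F) : Type :=
  {S : Set F // S = ∅ ∨ ∃ g : F, S = g • (H : Set F)}

namespace Maroti

variable {F : Type} [CommGroup F] {H : Subgroup F}

theorem coset_eq_of_mem {g₁ g₂ x : F} (h1 : x ∈ g₁ • (H : Set F))
    (h2 : x ∈ g₂ • (H : Set F)) : g₁ • (H : Set F) = g₂ • (H : Set F) := by
  rw [Set.mem_smul_set_iff_inv_smul_mem, smul_eq_mul] at h1 h2
  ext z
  simp only [Set.mem_smul_set_iff_inv_smul_mem, smul_eq_mul]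
  constructor
  · intro hz
    have : g₂⁻¹ * z = (g₂⁻¹ * x) * (g₁⁻¹ * x)⁻¹ * (g₁⁻¹ * z) := by group
    rw [this]
    exact H.mul_mem (H.mul_mem h2 (H.inv_mem h1)) hz
  · intro hz
    have : g₁⁻¹ * z = (g₁⁻¹ * x) * (g₂⁻¹ * x)⁻¹ * (g₂⁻¹ * z) := by group
    rw [this]
    exact H.mul_mem (H.mul_mem h1 (H.inv_mem h2)) hz

theorem inter_mem {S T : Set F} (hS : S = ∅ ∨ ∃ g : F, S = g • (H : Set F))
    (hT : T = ∅ ∨ ∃ g : F, T = g • (H : Set F)) :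
    S ∩ T = ∅ ∨ ∃ g : F, S ∩ T = g • (H : Set F) := by
  rcases hS with rfl | ⟨g₁, rfl⟩
  · left; simp
  rcases hT with rfl | ⟨g₂, rfl⟩
  · left; simp
  rcases Set.eq_empty_or_nonempty (g₁ • (H : Set F) ∩ g₂ • (H : Set F)) with he | ⟨x, hx₁, hx₂⟩
  · left; exact he
  · right
    refine ⟨g₂, ?_⟩
    rw [coset_eq_of_mem hx₁ hx₂, Set.inter_self]

instance : Min (Maroti F H) :=
  ⟨fun x y => ⟨x.1 ∩ y.1, inter_mem x.2 y.2⟩⟩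

theorem inf_val (x y : Maroti F H) : (x ⊓ y).1 = x.1 ∩ y.1 := rfl

instance : SemilatticeInf (Maroti F H) :=
  SemilatticeInf.mk' (fun x y => Subtype.ext (Set.inter_comm x.1 y.1))
    (fun x y z => Subtype.ext (Set.inter_assoc x.1 y.1 z.1))
    (fun x => Subtype.ext (Set.inter_self x.1))

noncomputable instance : SMul F (Maroti F H) :=
  ⟨fun g x => ⟨g • x.1, by
    rcases x.2 with h | ⟨g', h⟩
    · left; rw [h]; exact Set.smul_set_empty
    · right; exact ⟨g * g', by rw [h, smul_smul]⟩⟩⟩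

theorem smul_val (g : F) (x : Maroti F H) : (g • x).1 = g • x.1 := rfl

noncomputable instance : MulAction F (Maroti F H) where
  one_smul x := Subtype.ext (one_smul F x.1)
  mul_smul g h x := Subtype.ext (mul_smul g h x.1)

end Maroti

/-- The distinguished generator `1 • H` of the Maróti semilattice. -/
noncomputable def marotiGen (F : Type) [CommGroup F] (H : Subgroup F) : Maroti F H :=
  ⟨(1 : F) • (H : Set F), Or.inr ⟨1, rfl⟩⟩


/-!
Up to its bottom `∅`, `M(H,F)` is the regular action of `F` on `F/H`. Every `F`-semilattice `B`
in the quasivariety generated by `M(H,F)` satisfies the identities `h • x = x` for `h ∈ H` and,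
for `k ∉ H`, that `k • x ⊓ x` is an absorbing fixed point. So if `B` is nontrivial it contains
`p < q` with `p` fixed, `q` fixed by `H` and `k • q ⊓ q = p` for `k ∉ H`; then `∅ ↦ p`,
`gH ↦ g • q` embeds `M(H,F)` into `B`, and `M(H,F)` lies in the quasivariety generated by `B`.
-/

namespace Maroti

variable {F : Type} [CommGroup F] {H : Subgroup F}

instance : Bot (Maroti F H) := ⟨⟨∅, .inl rfl⟩⟩

instance : OrderBot (Maroti F H) where
  bot_le x := inf_eq_left.mp (Subtype.ext (Set.empty_inter x.1))

def coset (g : F) : Maroti F H := ⟨g • (H : Set F), .inr ⟨g, rfl⟩⟩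

theorem eq_bot_or_exists_eq_coset (x : Maroti F H) : x = ⊥ ∨ ∃ g, x = coset g := by
  obtain ⟨S, rfl | ⟨g, rfl⟩⟩ := x
  exacts [.inl rfl, .inr ⟨g, rfl⟩]

theorem coset_ne_bot (g : F) : (coset g : Maroti F H) ≠ ⊥ := fun h => by
  have hg : g ∈ (coset g : Maroti F H).1 := Set.mem_smul_set.mpr ⟨1, H.one_mem, mul_one g⟩
  rw [h] at hg
  exact Set.notMem_empty g hg

theorem coset_eq_coset_iff {g g' : F} : (coset g : Maroti F H) = coset g' ↔ g⁻¹ * g' ∈ H :=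
  Subtype.ext_iff.trans (leftCoset_eq_iff H)

theorem coset_inf_coset_of_mem {g g' : F} (h : g⁻¹ * g' ∈ H) :
    (coset g ⊓ coset g' : Maroti F H) = coset g := by
  rw [coset_eq_coset_iff.mpr h, inf_idem]

theorem coset_inf_coset_of_notMem {g g' : F} (h : g⁻¹ * g' ∉ H) :
    (coset g ⊓ coset g' : Maroti F H) = ⊥ :=
  Subtype.ext <| Set.eq_empty_of_forall_notMem fun _ ⟨hz, hz'⟩ =>
    h (coset_eq_coset_iff.mp (Subtype.ext (coset_eq_of_mem hz hz')))

theorem smul_coset (k g : F) : k • (coset g : Maroti F H) = coset (k * g) :=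
  Subtype.ext (smul_smul k g _)

theorem smul_bot (k : F) : k • (⊥ : Maroti F H) = ⊥ :=
  Subtype.ext Set.smul_set_empty

theorem smul_inf (g : F) (x y : Maroti F H) : g • (x ⊓ y) = g • x ⊓ g • y :=
  Subtype.ext Set.smul_set_inter

theorem smul_eq_self_of_mem {h : F} (hh : h ∈ H) (x : Maroti F H) : h • x = x := by
  obtain rfl | ⟨g, rfl⟩ := x.eq_bot_or_exists_eq_coset
  · exact smul_bot h
  · rw [smul_coset, coset_eq_coset_iff, mul_comm h g, mul_inv_rev, inv_mul_cancel_right]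
    exact H.inv_mem hh

theorem smul_inf_self_of_notMem {k : F} (hk : k ∉ H) (x : Maroti F H) : k • x ⊓ x = ⊥ := by
  obtain rfl | ⟨g, rfl⟩ := x.eq_bot_or_exists_eq_coset
  · rw [smul_bot, inf_idem]
  · rw [smul_coset]
    apply coset_inf_coset_of_notMem
    rwa [mul_comm k g, mul_inv_rev, inv_mul_cancel_right, inv_mem_iff]

instance : Nontrivial (Maroti F H) :=
  ⟨⟨⊥, coset 1, (coset_ne_bot 1).symm⟩⟩

theorem exists_eval_eq (hH : H ≠ ⊤) {x : Maroti F H} (hx : x.1 ≠ ∅) (y : Maroti F H) :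
    ∃ t : SLTerm F, t.eval x = y := by
  obtain ⟨g, rfl⟩ := x.eq_bot_or_exists_eq_coset.resolve_left fun h => hx (h ▸ rfl)
  obtain rfl | ⟨g', rfl⟩ := y.eq_bot_or_exists_eq_coset
  · obtain ⟨k, hk⟩ := SetLike.exists_not_mem_of_ne_top H hH
    exact ⟨.meet (.act k .var) .var, smul_inf_self_of_notMem hk _⟩
  · exact ⟨.act (g' * g⁻¹) .var, (smul_coset _ _).trans (by rw [inv_mul_cancel_right])⟩

end Maroti

section Transfer

variable {F A B : Type} [SemilatticeInf A] [SMul F A] [SemilatticeInf B] [SMul F B]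

theorem InQ.inV (h : InQ F A B) : InV F A B :=
  fun s t hst v => h [] (s, t) (fun w _ => hst w) v (by simp)

theorem IsHom.eval_comp {φ : A → B} (hφ : IsHom F φ) (t : SLTermN F) (v : ℕ → A) :
    t.eval (φ ∘ v) = φ (t.eval v) := by
  induction t with
  | var n => rfl
  | meet s t ihs iht => simp only [SLTermN.eval, ihs, iht, hφ.1]
  | act g t ih => simp only [SLTermN.eval, ih, hφ.2]

theorem IsHom.inQ_of_injective {φ : A → B} (hφ : IsHom F φ) (hinj : Function.Injective φ) :
    InQ F B A := by
  intro prem c hB v hprem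
  apply hinj
  rw [← hφ.eval_comp, ← hφ.eval_comp]
  exact hB _ fun p hp => by rw [hφ.eval_comp, hφ.eval_comp, hprem p hp]

end Transfer

section Embedding

open Maroti

variable {F : Type} [CommGroup F] {H : Subgroup F} {B : Type} [MulAction F B]

open Classical in
noncomputable def Maroti.lift (p q : B) (x : Maroti F H) : B :=
  if hx : x = ⊥ then p else (x.eq_bot_or_exists_eq_coset.resolve_left hx).choose • q

theorem Maroti.lift_bot (p q : B) : lift p q (⊥ : Maroti F H) = p :=
  dif_pos rfl

theorem Maroti.lift_coset {q : B} (hq : ∀ h ∈ H, h • q = q) (p : B) (g : F) :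
    lift p q (coset g : Maroti F H) = g • q := by
  rw [lift, dif_neg (coset_ne_bot g)]
  generalize_proofs hex
  rw [← mul_inv_cancel_left g hex.choose, mul_smul, hq _ (coset_eq_coset_iff.mp hex.choose_spec)]

variable [SemilatticeInf B]

/-- The images of `∅` and `H` under an embedding of `M(H,F)` into `B`. -/
structure IsMarotiPair (H : Subgroup F) (p q : B) : Prop where
  lt : p < q
  smul_left : ∀ g : F, g • p = p
  smul_right_of_mem : ∀ h ∈ H, h • q = q
  smul_right_inf_of_notMem : ∀ k ∉ H, k • q ⊓ q = p

namespace IsMarotiPair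

variable {p q : B} (hd : ∀ (g : F) (x y : B), g • (x ⊓ y) = g • x ⊓ g • y)
include hd

theorem le_smul (hpq : IsMarotiPair H p q) (g : F) : p ≤ g • q := by
  rw [← hpq.smul_left g]
  exact inf_eq_left.mp (by rw [← hd, inf_eq_left.mpr hpq.lt.le])

theorem smul_inf_smul_of_notMem (hpq : IsMarotiPair H p q) {g g' : F} (h : g⁻¹ * g' ∉ H) :
    g • q ⊓ g' • q = p := by
  rw [← mul_inv_cancel_left g g', mul_smul, ← hd, inf_comm, hpq.smul_right_inf_of_notMem _ h,
    hpq.smul_left]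

theorem le_lift (hpq : IsMarotiPair H p q) (x : Maroti F H) : p ≤ lift p q x := by
  obtain rfl | ⟨g, rfl⟩ := x.eq_bot_or_exists_eq_coset
  · exact (lift_bot p q).ge
  · exact (lift_coset hpq.smul_right_of_mem p g).symm ▸ hpq.le_smul hd g

theorem isHom_lift (hpq : IsMarotiPair H p q) : IsHom F (lift p q : Maroti F H → B) := by
  have hcoset := lift_coset hpq.smul_right_of_mem p
  refine ⟨fun x y => ?_, fun g x => ?_⟩
  · obtain rfl | ⟨g, rfl⟩ := x.eq_bot_or_exists_eq_coset
    · rw [bot_inf_eq, lift_bot, inf_eq_left.mpr (hpq.le_lift hd y)]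
    obtain rfl | ⟨g', rfl⟩ := y.eq_bot_or_exists_eq_coset
    · rw [inf_bot_eq, lift_bot, inf_eq_right.mpr (hpq.le_lift hd _)]
    by_cases h : g⁻¹ * g' ∈ H
    · rw [coset_inf_coset_of_mem h, coset_eq_coset_iff.mpr h, inf_idem]
    · rw [coset_inf_coset_of_notMem h, lift_bot, hcoset, hcoset,
        hpq.smul_inf_smul_of_notMem hd h]
  · obtain rfl | ⟨g', rfl⟩ := x.eq_bot_or_exists_eq_coset
    · rw [smul_bot, lift_bot, hpq.smul_left]
    · rw [smul_coset, hcoset, hcoset, mul_smul]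

theorem injective_lift (hpq : IsMarotiPair H p q) :
    Function.Injective (lift p q : Maroti F H → B) := by
  have hcoset := lift_coset hpq.smul_right_of_mem p
  have hne (g : F) : g • q ≠ p := fun h =>
    hpq.lt.ne' (by rw [← inv_smul_smul g q, h, hpq.smul_left])
  intro x y hxy
  obtain rfl | ⟨g, rfl⟩ := x.eq_bot_or_exists_eq_coset <;>
    obtain rfl | ⟨g', rfl⟩ := y.eq_bot_or_exists_eq_coset
  · rfl
  · exact absurd (hxy.symm.trans (lift_bot p q)) (hcoset g' ▸ hne g')
  · exact absurd (hxy.trans (lift_bot p q)) (hcoset g ▸ hne g)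
  · rw [hcoset, hcoset] at hxy
    refine coset_eq_coset_iff.mpr (by_contra fun h => hne g ?_)
    rw [← hpq.smul_inf_smul_of_notMem hd h, hxy, inf_idem]

end IsMarotiPair

theorem exists_isMarotiPair_of_eq_top [Nontrivial B] (hfix : ∀ h ∈ H, ∀ x : B, h • x = x)
    (hH : H = ⊤) : ∃ p q : B, IsMarotiPair H p q := by
  subst hH
  have hlt : ∃ p q : B, p < q := by
    obtain ⟨a, b, hab⟩ := exists_pair_ne B
    by_cases h : a ≤ b
    exacts [⟨a, b, h.lt_of_ne hab⟩, ⟨a ⊓ b, a, inf_lt_left.mpr h⟩]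
  obtain ⟨p, q, hpq⟩ := hlt
  exact ⟨p, q, hpq, fun g => hfix g (Subgroup.mem_top g) p, fun h hh => hfix h hh q,
    fun k hk => absurd (Subgroup.mem_top k) hk⟩

theorem exists_isMarotiPair_of_notMem [Nontrivial B] (hfix : ∀ h ∈ H, ∀ x : B, h • x = x)
    (habs : ∀ k ∉ H, ∀ x y : B, k • x ⊓ x ⊓ y = k • x ⊓ x)
    (hinv : ∀ k ∉ H, ∀ (g : F) (x : B), g • (k • x ⊓ x) = k • x ⊓ x)
    {k₀ : F} (hk₀ : k₀ ∉ H) (b : B) : ∃ p q : B, IsMarotiPair H p q := by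
  let p := k₀ • b ⊓ b
  have hle (y : B) : p ≤ y := inf_eq_left.mp (habs k₀ hk₀ b y)
  obtain ⟨q, hq⟩ := exists_ne p
  refine ⟨p, q, (hle q).lt_of_ne hq.symm, fun g => hinv k₀ hk₀ g b, fun h hh => hfix h hh q,
    fun k hk => ?_⟩
  exact le_antisymm (by rw [← habs k hk q p]; exact inf_le_right) (hle _)

theorem exists_isMarotiPair [Nontrivial B] (hV : InV F (Maroti F H) B) :
    ∃ p q : B, IsMarotiPair H p q := by
  have hfix (h : F) (hh : h ∈ H) (x : B) : h • x = x :=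
    hV (.act h (.var 0)) (.var 0) (fun v => smul_eq_self_of_mem hh (v 0)) fun _ => x
  have habs (k : F) (hk : k ∉ H) (x y : B) : k • x ⊓ x ⊓ y = k • x ⊓ x :=
    hV (.meet (.meet (.act k (.var 0)) (.var 0)) (.var 1)) (.meet (.act k (.var 0)) (.var 0))
      (fun v => by dsimp only [SLTermN.eval]; rw [smul_inf_self_of_notMem hk, bot_inf_eq])
      fun n => if n = 0 then x else y
  have hinv (k : F) (hk : k ∉ H) (g : F) (x : B) : g • (k • x ⊓ x) = k • x ⊓ x :=
    hV (.act g (.meet (.act k (.var 0)) (.var 0))) (.meet (.act k (.var 0)) (.var 0))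
      (fun v => by dsimp only [SLTermN.eval]; rw [smul_inf_self_of_notMem hk, smul_bot]) fun _ => x
  by_cases hH : H = ⊤
  · exact exists_isMarotiPair_of_eq_top hfix hH
  · obtain ⟨k₀, hk₀⟩ := SetLike.exists_not_mem_of_ne_top H hH
    exact exists_isMarotiPair_of_notMem hfix habs hinv hk₀ (Classical.arbitrary B)

end Embedding

theorem Maroti.minGen {F : Type} [CommGroup F] (H : Subgroup F) : MinGen F (Maroti F H) := by
  refine ⟨inferInstance, fun B _ _ hd hQ _ => ?_⟩
  obtain ⟨p, q, hpq⟩ := exists_isMarotiPair hQ.inV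
  exact (hpq.isHom_lift hd).inQ_of_injective (hpq.injective_lift hd)

/-- The Maróti semilattice `M(H,F)` is an `F`-semilattice (meet is intersection, the action
is by translation of cosets); if `H` is proper it is generated by each of its nonzero
elements, and consequently it generates a minimal quasivariety of `F`-semilattices. -/
theorem stmt_12 (F : Type) [CommGroup F] (H : Subgroup F) :
    (∀ x y : Maroti F H, (x ⊓ y).1 = x.1 ∩ y.1) ∧
    (∀ (g : F) (x : Maroti F H), (g • x).1 = g • x.1) ∧
    (∀ (g : F) (x y : Maroti F H), g • (x ⊓ y) = g • x ⊓ g • y) ∧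
    (H ≠ ⊤ →
      ∀ x : Maroti F H, x.1 ≠ ∅ → ∀ y : Maroti F H, ∃ t : SLTerm F, t.eval x = y) ∧
    MinGen F (Maroti F H) :=
  ⟨Maroti.inf_val, Maroti.smul_val, Maroti.smul_inf, fun hH _ hx => Maroti.exists_eval_eq hH hx,
    Maroti.minGen H⟩
end

section
/- For subgroups H₁ and H₂ of an abelian group F, the Maróti semilattices M(H₁,F) and M(H₂,F) are isomorphic as F-semilattices if and only if H₁ = H₂. Consequently they generate the same quasivariety if and only if H₁ = H₂. -/
open Pointwise

namespace Maroti

variable {F : Type} [CommGroup F] {H : Subgroup F}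

theorem mem_of_smul_marotiGen {h : F} (hx : h • marotiGen F H = marotiGen F H) : h ∈ H := by
  have hcoset : h • ((1 : F) • (H : Set F)) = (1 : F) • (H : Set F) := congrArg Subtype.val hx
  rw [one_smul] at hcoset
  have hself : h ∈ h • (H : Set F) := ⟨1, H.one_mem, mul_one h⟩
  rwa [hcoset] at hself

theorem mem_iff_forall_smul_eq (h : F) : h ∈ H ↔ ∀ x : Maroti F H, h • x = x :=
  ⟨smul_eq_self_of_mem, fun hfix => mem_of_smul_marotiGen (hfix _)⟩

end Maroti

section FixedByAll

variable {F A B : Type} [SMul F A] [SMul F B] {φ : A → B}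

theorem forall_smul_eq_of_surjective (hφ : ∀ (g : F) (x : A), φ (g • x) = g • φ x)
    (hsurj : Function.Surjective φ) {h : F} (hA : ∀ a : A, h • a = a) (b : B) : h • b = b := by
  obtain ⟨a, rfl⟩ := hsurj b
  rw [← hφ, hA]

theorem forall_smul_eq_of_injective (hφ : ∀ (g : F) (x : A), φ (g • x) = g • φ x)
    (hinj : Function.Injective φ) {h : F} (hB : ∀ b : B, h • b = b) (a : A) : h • a = a :=
  hinj (by rw [hφ, hB])

theorem InQ.forall_smul_eq [SemilatticeInf A] [SemilatticeInf B] (hAB : InQ F A B) {h : F}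
    (hA : ∀ a : A, h • a = a) (b : B) : h • b = b :=
  hAB [] (.act h (.var 0), .var 0) (fun v _ => hA (v 0)) (fun _ => b) (by simp)

end FixedByAll

/-- `M(H₁,F) ≅ M(H₂,F)` iff `H₁ = H₂`; consequently they generate the same quasivariety
iff `H₁ = H₂`. -/
theorem stmt_13 (F : Type) [CommGroup F] (H₁ H₂ : Subgroup F) :
    ((∃ φ : Maroti F H₁ → Maroti F H₂, Function.Bijective φ ∧ IsHom F φ) ↔ H₁ = H₂) ∧
    ((InQ F (Maroti F H₁) (Maroti F H₂) ∧ InQ F (Maroti F H₂) (Maroti F H₁)) ↔ H₁ = H₂) := by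
  refine ⟨⟨?_, ?_⟩, ⟨?_, ?_⟩⟩
  · rintro ⟨φ, ⟨hinj, hsurj⟩, -, hφ⟩
    ext h
    simp only [Maroti.mem_iff_forall_smul_eq]
    exact ⟨forall_smul_eq_of_surjective hφ hsurj, forall_smul_eq_of_injective hφ hinj⟩
  · rintro rfl
    exact ⟨id, Function.bijective_id, fun _ _ => rfl, fun _ _ => rfl⟩
  · rintro ⟨h₁₂, h₂₁⟩
    ext h
    simp only [Maroti.mem_iff_forall_smul_eq]
    exact ⟨h₁₂.forall_smul_eq, h₂₁.forall_smul_eq⟩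
  · rintro rfl
    exact ⟨fun _ _ h => h, fun _ _ h => h⟩
end

section
/- Let K be a subgroup of an abelian group F, T a transversal of the cosets of K in F, and U a K-semilattice. Define the structure B on {o} ∪ (U × T) by: (u,t) ∧ (v,t) = (u∧v, t); (u,t₁) ∧ (v,t₂) = o when t₁ ≠ t₂; x ∧ o = o; g(o) = o; and g(u,t) = (gtf⁻¹(u), f) where f is the unique element of T ∩ gtK. Then B is an F-semilattice. -/
open Pointwise

/-- `T` is a transversal of the cosets of `K` in `F`: it meets each coset in exactly one
element. -/
def IsTransversal (F : Type) [CommGroup F] (K : Subgroup F) (T : Set F) : Prop :=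
  ∀ g : F, ∃! t : F, t ∈ T ∧ t ∈ g • (K : Set F)

/-- `inf` and `smul` make `A` into an `F`-semilattice (axioms (i)–(iv)). -/
def IsFSemilatticeOps (F A : Type) [CommGroup F] (inf : A → A → A) (smul : F → A → A) : Prop :=
  (∀ x y, inf x y = inf y x) ∧ (∀ x y z, inf (inf x y) z = inf x (inf y z)) ∧
  (∀ x, inf x x = x) ∧ (∀ x, smul 1 x = x) ∧
  (∀ (f g : F) (x), smul f (smul g x) = smul (f * g) x) ∧
  (∀ (g : F) (x y), smul g (inf x y) = inf (smul g x) (smul g y))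

/-- The defining equations of the twisted multiple `B(K,F,U)` on `{o} ∪ (U × T)`
(with `none` playing the role of `o`):  `(u,t) ∧ (v,t) = (u ⊓ v, t)`,
`(u,t₁) ∧ (v,t₂) = o` for `t₁ ≠ t₂`, `x ∧ o = o ∧ x = o`, `g(o) = o`, and
`g(u,t) = (gtf⁻¹(u), f)` where `f` is the unique element of `T ∩ gtK`. -/
def TwistedSpec (F : Type) [CommGroup F] (K : Subgroup F) (T : Set F)
    (U : Type) [SemilatticeInf U] [MulAction K U]
    (inf : Option (U × T) → Option (U × T) → Option (U × T))
    (smul : F → Option (U × T) → Option (U × T)) : Prop :=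
  (∀ (u v : U) (t : T), inf (some (u, t)) (some (v, t)) = some (u ⊓ v, t)) ∧
  (∀ (u v : U) (t₁ t₂ : T), t₁ ≠ t₂ → inf (some (u, t₁)) (some (v, t₂)) = none) ∧
  (∀ x, inf x none = none) ∧ (∀ x, inf none x = none) ∧
  (∀ g : F, smul g none = none) ∧
  (∀ (g : F) (u : U) (t : T) (f : F) (hfT : f ∈ T)
      (_ : f ∈ (g * (t : F)) • (K : Set F)) (hk : g * (t : F) * f⁻¹ ∈ K),
      smul g (some (u, t)) = some ((⟨g * (t : F) * f⁻¹, hk⟩ : K) • u, ⟨f, hfT⟩))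

/-
`T` picks a representative `rep(a)` of each coset `aK`, so `F` acts on `U × T` by sending the
`T`-coordinate `t` to `f = rep(g t)` and correcting the `U`-coordinate by `g t f⁻¹ ∈ K`. The
action laws reduce to the cocycle identity `c(f · rep(g t)) · c(g t) = c(f g t)` for
`c(a) = a · rep(a)⁻¹`, and the action preserves meets because `t ↦ rep(g t)` is injective on
`T` and `K` acts on `U` by semilattice automorphisms.
-/

section FiberInf

variable {U ι : Type*} [SemilatticeInf U] [DecidableEq ι]

def fiberInf : Option (U × ι) → Option (U × ι) → Option (U × ι)
  | some (u, s), some (v, t) => if s = t then some (u ⊓ v, s) else none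
  | _, _ => none

@[simp]
lemma fiberInf_some_some (u v : U) (s t : ι) :
    fiberInf (some (u, s)) (some (v, t)) = if s = t then some (u ⊓ v, s) else none :=
  rfl

@[simp]
lemma fiberInf_none_left (x : Option (U × ι)) : fiberInf none x = none :=
  rfl

@[simp]
lemma fiberInf_none_right (x : Option (U × ι)) : fiberInf x none = none := by
  rcases x with _ | ⟨u, s⟩ <;> rfl

lemma fiberInf_comm (x y : Option (U × ι)) : fiberInf x y = fiberInf y x := by
  rcases x with _ | ⟨u, s⟩ <;> rcases y with _ | ⟨v, t⟩ <;> simp only [fiberInf_none_left,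
    fiberInf_none_right, fiberInf_some_some]
  by_cases h : s = t
  · simp [h, inf_comm]
  · simp [h, Ne.symm h]

lemma fiberInf_assoc (x y z : Option (U × ι)) :
    fiberInf (fiberInf x y) z = fiberInf x (fiberInf y z) := by
  rcases x with _ | ⟨u, s⟩ <;> rcases y with _ | ⟨v, t⟩ <;> rcases z with _ | ⟨w, r⟩ <;>
    simp only [fiberInf_none_left, fiberInf_none_right, fiberInf_some_some]
  by_cases hst : s = t <;> by_cases htr : t = r
  · subst hst htr; simp [inf_assoc]
  · subst hst; simp [htr]
  · subst htr; simp [hst]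
  · simp [hst, htr]

lemma fiberInf_self (x : Option (U × ι)) : fiberInf x x = x := by
  rcases x with _ | ⟨u, s⟩ <;> simp

end FiberInf

section Transversal

variable {F : Type} [CommGroup F] {K : Subgroup F}

lemma mem_smul_subgroup_iff {a f : F} : f ∈ a • (K : Set F) ↔ a * f⁻¹ ∈ K := by
  rw [mem_leftCoset_iff, SetLike.mem_coe, ← inv_mem_iff, mul_inv_rev, inv_inv, mul_comm]

namespace IsTransversal

open scoped Classical

variable {T : Set F} (hT : IsTransversal F K T)

noncomputable def rep (a : F) : T :=
  ⟨(hT a).choose, (hT a).choose_spec.1.1⟩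

lemma mul_inv_rep_mem (a : F) : a * (hT.rep a : F)⁻¹ ∈ K :=
  mem_smul_subgroup_iff.1 (hT a).choose_spec.1.2

lemma eq_rep {a f : F} (hfT : f ∈ T) (hf : f ∈ a • (K : Set F)) : f = hT.rep a :=
  (hT a).choose_spec.2 f ⟨hfT, hf⟩

lemma rep_eq_rep_iff {a b : F} : hT.rep a = hT.rep b ↔ a * b⁻¹ ∈ K := by
  have hb := hT.mul_inv_rep_mem b
  constructor
  · intro h
    have ha := hT.mul_inv_rep_mem a
    rw [h] at ha
    simpa [mul_assoc] using K.mul_mem ha (K.inv_mem hb)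
  · intro h
    refine (Subtype.ext (hT.eq_rep (hT.rep b).2 (mem_smul_subgroup_iff.2 ?_))).symm
    simpa [mul_assoc] using K.mul_mem h hb

lemma rep_coe (t : T) : hT.rep t = t :=
  (Subtype.ext (hT.eq_rep t.2 (mem_smul_subgroup_iff.2 (by simp [K.one_mem])))).symm

lemma rep_mul_rep (f a : F) : hT.rep (f * hT.rep a) = hT.rep (f * a) := by
  rw [rep_eq_rep_iff]
  simpa [mul_comm, mul_left_comm, mul_assoc] using K.inv_mem (hT.mul_inv_rep_mem a)

lemma rep_mul_injective (g : F) : Function.Injective fun t : T => hT.rep (g * t) := by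
  intro s t h
  rw [← hT.rep_coe s, ← hT.rep_coe t, rep_eq_rep_iff]
  simpa only [← div_eq_mul_inv, mul_div_mul_left_eq_div] using (hT.rep_eq_rep_iff).1 h

/-- The element `a · rep(a)⁻¹` of `K`, i.e. `gtf⁻¹` for `a = gt` and `f = rep(gt)`. -/
noncomputable def cocycle (a : F) : K :=
  ⟨a * (hT.rep a : F)⁻¹, hT.mul_inv_rep_mem a⟩

lemma cocycle_coe (t : T) : hT.cocycle t = 1 :=
  Subtype.ext (by simp [cocycle, rep_coe])

lemma cocycle_mul_rep_mul_cocycle (f a : F) :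
    hT.cocycle (f * hT.rep a) * hT.cocycle a = hT.cocycle (f * a) := by
  refine Subtype.ext ?_
  simp only [cocycle, Subgroup.coe_mul, rep_mul_rep]
  simp [mul_comm, mul_left_comm, mul_assoc]

variable {U : Type} [MulAction K U]

noncomputable def twist (g : F) (p : U × T) : U × T :=
  (hT.cocycle (g * p.2) • p.1, hT.rep (g * p.2))

lemma twist_one (p : U × T) : hT.twist 1 p = p := by
  simp [twist, cocycle_coe, rep_coe]

lemma twist_twist (f g : F) (p : U × T) : hT.twist f (hT.twist g p) = hT.twist (f * g) p := by
  simp only [twist, smul_smul, cocycle_mul_rep_mul_cocycle, rep_mul_rep, mul_assoc]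

lemma twist_eq {g f : F} (u : U) (t : T) (hfT : f ∈ T) (hf : f ∈ (g * t) • (K : Set F))
    (hk : g * t * f⁻¹ ∈ K) : hT.twist g (u, t) = ((⟨g * t * f⁻¹, hk⟩ : K) • u, ⟨f, hfT⟩) := by
  have hrep : hT.rep (g * t) = ⟨f, hfT⟩ := (Subtype.ext (hT.eq_rep hfT hf)).symm
  have hcoc : hT.cocycle (g * t) = ⟨g * t * f⁻¹, hk⟩ := by
    simp only [cocycle, hrep]
  simp [twist, hrep, hcoc]

variable [SemilatticeInf U]

lemma map_twist_fiberInf (hU : ∀ (k : K) (x y : U), k • (x ⊓ y) = k • x ⊓ k • y) (g : F)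
    (x y : Option (U × T)) :
    (fiberInf x y).map (hT.twist g) = fiberInf (x.map (hT.twist g)) (y.map (hT.twist g)) := by
  rcases x with _ | ⟨u, s⟩ <;> rcases y with _ | ⟨v, t⟩ <;>
    simp only [fiberInf_none_left, fiberInf_none_right, fiberInf_some_some, Option.map_none,
      Option.map_some]
  by_cases h : s = t
  · simp [h, twist, hU]
  · simp [h, twist, (hT.rep_mul_injective g).ne h]

lemma isFSemilatticeOps_twist (hU : ∀ (k : K) (x y : U), k • (x ⊓ y) = k • x ⊓ k • y) :
    IsFSemilatticeOps F (Option (U × T)) fiberInf fun g => Option.map (hT.twist g) := by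
  refine ⟨fiberInf_comm, fiberInf_assoc, fiberInf_self, ?_, ?_, hT.map_twist_fiberInf hU⟩
  · rintro (_ | p) <;> simp [twist_one]
  · rintro f g (_ | p) <;> simp [twist_twist]

lemma twistedSpec_twist :
    TwistedSpec F K T U fiberInf fun g => Option.map (hT.twist g) := by
  refine ⟨fun u v t => by simp, fun u v s t h => by simp [h], fiberInf_none_right,
    fiberInf_none_left, fun g => rfl, ?_⟩
  intro g u t f hfT hf hk
  simp [hT.twist_eq u t hfT hf hk]

end IsTransversal

end Transversal

/-- The twisted multiple `B(K,F,U)` is an `F`-semilattice. -/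
theorem stmt_14 (F : Type) [CommGroup F] (K : Subgroup F) (T : Set F)
    (hT : IsTransversal F K T) (U : Type) [SemilatticeInf U] [MulAction K U]
    (hU : ∀ (k : K) (x y : U), k • (x ⊓ y) = k • x ⊓ k • y) :
    ∃ (inf : Option (U × T) → Option (U × T) → Option (U × T))
      (smul : F → Option (U × T) → Option (U × T)),
      IsFSemilatticeOps F (Option (U × T)) inf smul ∧ TwistedSpec F K T U inf smul :=
  ⟨_, _, hT.isFSemilatticeOps_twist hU, hT.twistedSpec_twist⟩
end

section
/- Let K be a proper subgroup of an abelian group F, T a transversal of K, and U a K-semilattice generated by an element a. Then for every t ∈ T, the element (a,t) generates the twisted-multiple F-semilattice B(K,F,U) on {o} ∪ (U × T). -/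
/-- Evaluation of a unary term using explicitly given operations. -/
def SLTerm.evalRaw {F A : Type} (inf : A → A → A) (smul : F → A → A) : SLTerm F → A → A
  | .var, a => a
  | .meet s t, a => inf (s.evalRaw inf smul a) (t.evalRaw inf smul a)
  | .act g t, a => smul g (t.evalRaw inf smul a)

open Pointwise

/-!
Terms over `K` act on the `t`-th copy of `U` exactly as they act on `U`, so `(a,t)` generates
`U × {t}`; translating by `t' t⁻¹` carries this copy onto `U × {t'}`. Finally, since `K` is
proper, some `g ∉ K` moves `(a,t)` into another copy, and then `g(a,t) ∧ (a,t) = o`.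
-/

def SLTerm.map {G H : Type} (φ : G → H) : SLTerm G → SLTerm H
  | .var => .var
  | .meet s t => .meet (s.map φ) (t.map φ)
  | .act g t => .act (φ g) (t.map φ)

namespace TwistedSpec

variable {F : Type} [CommGroup F] {K : Subgroup F} {T : Set F} {U : Type} [SemilatticeInf U]
  [MulAction K U] {inf : Option (U × T) → Option (U × T) → Option (U × T)}
  {smul : F → Option (U × T) → Option (U × T)}

theorem smul_some_of_mem (hspec : TwistedSpec F K T U inf smul) (g : F) (u : U) (t : T)
    {f : F} (hfT : f ∈ T) (hk : g * t * f⁻¹ ∈ K) :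
    smul g (some (u, t)) = some ((⟨g * t * f⁻¹, hk⟩ : K) • u, ⟨f, hfT⟩) :=
  hspec.2.2.2.2.2 g u t f hfT ⟨(g * t * f⁻¹)⁻¹, K.inv_mem hk, by simp [← div_eq_mul_inv]⟩ hk

theorem smul_some_subgroup (hspec : TwistedSpec F K T U inf smul) (k : K) (u : U) (t : T) :
    smul k (some (u, t)) = some (k • u, t) := by
  have hk : (k : F) * t * (t : F)⁻¹ ∈ K := by simp
  rw [hspec.smul_some_of_mem k u t t.2 hk]
  simp

theorem smul_some_transport (hspec : TwistedSpec F K T U inf smul) (u : U) (t t' : T) :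
    smul (t' * (t : F)⁻¹) (some (u, t)) = some (u, t') := by
  have hk : (t' : F) * (t : F)⁻¹ * t * (t' : F)⁻¹ ∈ K := by simp
  have hk_one : (⟨_, hk⟩ : K) = 1 := Subtype.ext (by simp)
  rw [hspec.smul_some_of_mem _ u t t'.2 hk, hk_one, one_smul]

theorem evalRaw_map_coe (hspec : TwistedSpec F K T U inf smul) (a : U) (t : T)
    (s : SLTerm K) : (s.map (↑)).evalRaw inf smul (some (a, t)) = some (s.eval a, t) := by
  induction s with
  | var => rfl
  | meet s₁ s₂ ih₁ ih₂ =>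
    simp only [SLTerm.map, SLTerm.evalRaw, SLTerm.eval, ih₁, ih₂, hspec.1]
  | act k s ih =>
    simp only [SLTerm.map, SLTerm.evalRaw, SLTerm.eval, ih, hspec.smul_some_subgroup]

theorem exists_inf_smul_eq_none (hspec : TwistedSpec F K T U inf smul) (hK : K ≠ ⊤)
    (hT : IsTransversal F K T) (u : U) (t : T) :
    ∃ g : F, inf (smul g (some (u, t))) (some (u, t)) = none := by
  obtain ⟨g, hg⟩ : ∃ g : F, g ∉ K := by
    by_contra! h
    exact hK (K.eq_top_iff'.mpr h)
  obtain ⟨f, ⟨hfT, k, hkK, hk⟩, -⟩ := hT (g * t)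
  have hgtf : g * t * f⁻¹ ∈ K := by
    change g * t * k = f at hk
    rw [← hk, mul_inv_rev, mul_comm k⁻¹, mul_inv_cancel_left]
    exact K.inv_mem hkK
  have hft : (⟨f, hfT⟩ : T) ≠ t := by
    intro hft
    rw [← hft, mul_inv_cancel_right] at hgtf
    exact hg hgtf
  exact ⟨g, by rw [hspec.smul_some_of_mem g u t hfT hgtf]; exact hspec.2.1 _ _ _ _ hft⟩

end TwistedSpec

theorem stmt_16_general (F : Type) [CommGroup F] (K : Subgroup F) (hK : K ≠ ⊤) (T : Set F)
    (hT : IsTransversal F K T) (U : Type) [SemilatticeInf U] [MulAction K U]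
    (a : U) (ha : ∀ u : U, ∃ s : SLTerm K, s.eval a = u)
    (inf : Option (U × T) → Option (U × T) → Option (U × T))
    (smul : F → Option (U × T) → Option (U × T))
    (hspec : TwistedSpec F K T U inf smul) :
    ∀ t : T, ∀ x : Option (U × T), ∃ s : SLTerm F,
      SLTerm.evalRaw inf smul s (some (a, t)) = x := by
  intro t x
  rcases x with _ | ⟨u, t'⟩
  · obtain ⟨g, hg⟩ := hspec.exists_inf_smul_eq_none hK hT a t
    exact ⟨.meet (.act g .var) .var, hg⟩
  · obtain ⟨s, rfl⟩ := ha u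
    refine ⟨.act (t' * (t : F)⁻¹) (s.map (↑)), ?_⟩
    simp only [SLTerm.evalRaw, hspec.evalRaw_map_coe, hspec.smul_some_transport]

/-- If `K` is proper and `U` is generated by `a`, then `(a,t)` generates `B(K,F,U)` for
every `t ∈ T`. -/
theorem stmt_16 (F : Type) [CommGroup F] (K : Subgroup F) (hK : K ≠ ⊤) (T : Set F)
    (hT : IsTransversal F K T) (U : Type) [SemilatticeInf U] [MulAction K U]
    (hU : ∀ (k : K) (x y : U), k • (x ⊓ y) = k • x ⊓ k • y)
    (a : U) (ha : ∀ u : U, ∃ s : SLTerm K, s.eval a = u)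
    (inf : Option (U × T) → Option (U × T) → Option (U × T))
    (smul : F → Option (U × T) → Option (U × T))
    (hops : IsFSemilatticeOps F (Option (U × T)) inf smul)
    (hspec : TwistedSpec F K T U inf smul) :
    ∀ t : T, ∀ x : Option (U × T), ∃ s : SLTerm F,
      SLTerm.evalRaw inf smul s (some (a, t)) = x :=
  stmt_16_general F K hK T hT U a ha inf smul hspec
end

section
/- Let R be a minimal quasivariety of F-semilattices whose 1-generated free algebra A = Fr_R(a) is nontrivial and has a least element o. Then K = {g ∈ F : a ∧ g(a) ≠ o} is a subgroup of F, and for f₁,…,fₙ ∈ F one has f₁(a) ∧ ⋯ ∧ fₙ(a) ≠ o if and only if f₁K = ⋯ = fₙK. -/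
def SmulInfDistrib (F A : Type) [SemilatticeInf A] [SMul F A] : Prop :=
  ∀ (g : F) (x y : A), g • (x ⊓ y) = g • x ⊓ g • y

theorem InQ.eval_eq {F A B : Type} [SemilatticeInf A] [SMul F A] [SemilatticeInf B] [SMul F B]
    (hAB : InQ F A B) {s t : SLTermN F} (h : ∀ v : ℕ → A, s.eval v = t.eval v)
    (v : ℕ → B) : s.eval v = t.eval v :=
  hAB [] (s, t) (fun v _ => h v) v (by simp)

section GeneratedSubalgebra

variable {F : Type} {A : Type} [SemilatticeInf A]

theorem inf_mem_genSet [SMul F A] {b x y : A} (hx : x ∈ genSet F b) (hy : y ∈ genSet F b) :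
    x ⊓ y ∈ genSet F b := by
  obtain ⟨s, rfl⟩ := hx
  obtain ⟨t, rfl⟩ := hy
  exact ⟨s.meet t, rfl⟩

theorem smul_mem_genSet [SMul F A] {b x : A} (g : F) (hx : x ∈ genSet F b) :
    g • x ∈ genSet F b := by
  obtain ⟨t, rfl⟩ := hx
  exact ⟨t.act g, rfl⟩

theorem self_mem_genSet [SMul F A] (b : A) : b ∈ genSet F b := ⟨.var, rfl⟩

variable [Monoid F] [MulAction F A]

instance (b : A) : SemilatticeInf (genSet F b) :=
  Subtype.semilatticeInf fun _ _ => inf_mem_genSet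

instance (b : A) : MulAction F (genSet F b) where
  smul g x := ⟨g • x.1, smul_mem_genSet g x.2⟩
  one_smul x := Subtype.ext (one_smul F x.1)
  mul_smul g h x := Subtype.ext (mul_smul g h x.1)

theorem genSet.coe_eval (b : A) (t : SLTermN F) (v : ℕ → genSet F b) :
    ((t.eval v : genSet F b) : A) = t.eval fun n => (v n : A) := by
  induction t with
  | var n => rfl
  | meet s t hs ht => exact congrArg₂ (· ⊓ ·) hs ht
  | act g t ht => exact congrArg (g • ·) ht

theorem inQ_genSet (b : A) : InQ F A (genSet F b) := by
  intro prem c h v hprem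
  apply Subtype.ext
  rw [genSet.coe_eval, genSet.coe_eval]
  refine h _ fun p hp => ?_
  rw [← genSet.coe_eval, ← genSet.coe_eval, hprem p hp]

theorem smulInfDistrib_genSet {b : A} (hA : SmulInfDistrib F A) :
    SmulInfDistrib F (genSet F b) :=
  fun g x y => Subtype.ext (hA g x y)

end GeneratedSubalgebra

section Distributive

variable {F : Type} [Group F] {A : Type} [SemilatticeInf A] [MulAction F A]
  (hA : SmulInfDistrib F A) {o : A}
include hA

theorem SmulInfDistrib.smul_mono (g : F) : Monotone (g • · : A → A) := fun x y h =>
  inf_eq_left.mp (by rw [← hA, inf_eq_left.mpr h])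

theorem SmulInfDistrib.smul_bot (ho : IsBot o) (g : F) : g • o = o := by
  refine le_antisymm ?_ (ho _)
  simpa using hA.smul_mono g (ho (g⁻¹ • o))

theorem SmulInfDistrib.smul_eq_bot_iff (ho : IsBot o) {g : F} {x : A} :
    g • x = o ↔ x = o := by
  rw [smul_eq_iff_eq_inv_smul, hA.smul_bot ho]

theorem SmulInfDistrib.smul_inf_smul (f g : F) (x : A) :
    f • x ⊓ g • x = f • (x ⊓ (f⁻¹ * g) • x) := by
  rw [hA, smul_smul, mul_inv_cancel_left]

theorem SmulInfDistrib.eval_bot (ho : IsBot o) (t : SLTerm F) : t.eval o = o := by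
  induction t with
  | var => rfl
  | meet s t hs ht => exact (congrArg₂ (· ⊓ ·) hs ht).trans (inf_idem o)
  | act g t ht => exact (congrArg (g • ·) ht).trans (hA.smul_bot ho g)

end Distributive

section Minimal

variable {F : Type} [CommGroup F] {A : Type} [SemilatticeInf A] [MulAction F A]
  (hA : SmulInfDistrib F A) {o : A} (ho : IsBot o)
include hA ho

theorem SmulInfDistrib.inf_smul_eval_eq_bot {b : A} {g : F} (hb : b ⊓ g • b = o)
    (t : SLTerm F) : t.eval b ⊓ g • t.eval b = o := by
  induction t with
  | var => exact hb
  | meet s t hs _ =>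
    refine le_antisymm ?_ (ho _)
    calc (s.eval b ⊓ t.eval b) ⊓ g • (s.eval b ⊓ t.eval b)
        ≤ s.eval b ⊓ g • s.eval b := inf_le_inf inf_le_left (hA.smul_mono g inf_le_left)
      _ = o := hs
  | act f t ht =>
    show f • t.eval b ⊓ g • f • t.eval b = o
    rw [smul_comm g f, ← hA, ht, hA.smul_bot ho]

variable (hmin : MinGen F A)
include hmin

theorem SmulInfDistrib.inf_smul_eq_bot_of_ne_bot {b : A} (hb : b ≠ o) {g : F}
    (hbg : b ⊓ g • b = o) (x : A) : x ⊓ g • x = o := by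
  have hzero : ∀ y ∈ genSet F b, y ⊓ g • y = o := by
    rintro y ⟨t, rfl⟩
    exact hA.inf_smul_eval_eq_bot ho hbg t
  have ho_mem : o ∈ genSet F b := ⟨.meet .var (.act g .var), hbg⟩
  have hnt : Nontrivial (genSet F b) :=
    ⟨⟨b, self_mem_genSet b⟩, ⟨o, ho_mem⟩, fun h => hb (congrArg Subtype.val h)⟩
  have hQ : InQ F (genSet F b) A := hmin.2 _ (smulInfDistrib_genSet hA) (inQ_genSet b) hnt
  let s : SLTermN F := .meet (.var 0) (.act g (.var 0))
  have hidentity : ∀ v : ℕ → genSet F b,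
      SLTermN.eval (.meet s (.meet (.var 1) (.act g (.var 1)))) v = s.eval v := by
    intro v
    apply Subtype.ext
    rw [genSet.coe_eval, genSet.coe_eval]
    simp only [s, SLTermN.eval, hzero _ (v 0).2, hzero _ (v 1).2, inf_idem]
  have hx := hQ.eval_eq hidentity fun n => if n = 0 then x else o
  simp only [s, SLTermN.eval, if_pos, one_ne_zero, if_false, hA.smul_bot ho, inf_idem] at hx
  exact hx.symm.trans (inf_of_le_right (ho _))

theorem SmulInfDistrib.inf_smul_ne_bot {a : A} {g : F} (hag : a ⊓ g • a ≠ o) {x : A}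
    (hx : x ≠ o) : x ⊓ g • x ≠ o :=
  fun h => hag (hA.inf_smul_eq_bot_of_ne_bot ho hmin hx h a)

theorem SmulInfDistrib.inf'_smul_ne_bot_iff {a : A} {ι : Type} (s : Finset ι)
    (hs : s.Nonempty) (f : ι → F) :
    s.inf' hs (fun i => f i • a) ≠ o ↔ ∀ i ∈ s, ∀ j ∈ s, a ⊓ ((f i)⁻¹ * f j) • a ≠ o := by
  constructor
  · intro hne i hi j hj hij
    refine hne (le_antisymm ?_ (ho _))
    calc s.inf' hs (fun i => f i • a) ≤ f i • a ⊓ f j • a :=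
          le_inf (Finset.inf'_le _ hi) (Finset.inf'_le _ hj)
      _ = o := by rw [hA.smul_inf_smul, hij, hA.smul_bot ho]
  · intro hK
    induction hs using Finset.Nonempty.cons_induction with
    | singleton i => simpa [hA.smul_eq_bot_iff ho] using hK i (by simp) i (by simp)
    | cons j s hj hs ih =>
      obtain ⟨i, hi⟩ := id hs
      set x := s.inf' hs fun i => f i • a
      have hx : x ≠ o := ih fun k hk l hl =>
        hK k (Finset.mem_cons_of_mem hk) l (Finset.mem_cons_of_mem hl)
      have hgx : ((f i)⁻¹ * f j) • x ≤ f j • a :=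
        calc ((f i)⁻¹ * f j) • x ≤ ((f i)⁻¹ * f j) • f i • a :=
              hA.smul_mono _ (Finset.inf'_le _ hi)
          _ = f j • a := by rw [smul_smul, mul_comm, mul_inv_cancel_left]
      have hxgx := hA.inf_smul_ne_bot ho hmin
        (hK i (Finset.mem_cons_of_mem hi) j (Finset.mem_cons_self j s)) hx
      rw [Finset.inf'_cons hs]
      exact fun h => hxgx (le_antisymm (h ▸ le_inf (inf_le_right.trans hgx) inf_le_left) (ho _))

variable {a : A} (ha : a ≠ o)

def overlapSubgroup : Subgroup F where
  carrier := {g | a ⊓ g • a ≠ o}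
  one_mem' := by simpa using ha
  mul_mem' {g h} hg hh := by
    have hle : (a ⊓ g • a) ⊓ h • (a ⊓ g • a) ≤ a ⊓ (g * h) • a := by
      rw [hA, mul_comm, ← smul_smul]
      exact inf_le_inf inf_le_left inf_le_right
    exact fun hgh => hA.inf_smul_ne_bot ho hmin hh hg (le_antisymm (hgh ▸ hle) (ho _))
  inv_mem' {g} hg := by
    show a ⊓ g⁻¹ • a ≠ o
    rwa [← inv_smul_smul g a, ← hA, inv_smul_smul, ne_eq, hA.smul_eq_bot_iff ho, inf_comm]

end Minimal

theorem stmt_18_general (F : Type) [CommGroup F] (A : Type) [SemilatticeInf A] [MulAction F A]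
    (hA : ∀ (g : F) (x y : A), g • (x ⊓ y) = g • x ⊓ g • y)
    (a : A) (hgen : ∀ x : A, ∃ t : SLTerm F, t.eval a = x)
    (o : A) (ho : ∀ x : A, o ≤ x)
    (hmin : MinGen F A) :
    ∃ K : Subgroup F, (K : Set F) = {g : F | a ⊓ g • a ≠ o} ∧
      ∀ (n : ℕ) (f : Fin (n + 1) → F),
        ((Finset.univ.inf' Finset.univ_nonempty fun i => f i • a) ≠ o ↔
          ∀ i j : Fin (n + 1), (f i)⁻¹ * f j ∈ K) := by
  have hA' : SmulInfDistrib F A := hA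
  have ha : a ≠ o := by
    rintro rfl
    obtain ⟨x, y, hxy⟩ := hmin.1
    obtain ⟨s, rfl⟩ := hgen x
    obtain ⟨t, rfl⟩ := hgen y
    exact hxy ((hA'.eval_bot ho s).trans (hA'.eval_bot ho t).symm)
  refine ⟨overlapSubgroup hA' ho hmin ha, rfl, fun n f => ?_⟩
  rw [hA'.inf'_smul_ne_bot_iff ho hmin]
  simp only [Finset.mem_univ, true_implies]
  rfl

/-- For a minimal quasivariety whose nontrivial 1-generated free algebra `A` (free
generator `a`) has a least element `o`, the set `K = {g : F | a ⊓ g•a ≠ o}` is a subgroup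
of `F`, and a meet `f₁(a) ⊓ ⋯ ⊓ fₙ(a)` is nonzero iff `f₁K = ⋯ = fₙK`. -/
theorem stmt_18 (F : Type) [CommGroup F] (A : Type) [SemilatticeInf A] [MulAction F A]
    (hA : ∀ (g : F) (x y : A), g • (x ⊓ y) = g • x ⊓ g • y)
    (hnt : Nontrivial A)
    (a : A) (hgen : ∀ x : A, ∃ t : SLTerm F, t.eval a = x)
    (o : A) (ho : ∀ x : A, o ≤ x)
    (hmin : MinGen F A) :
    ∃ K : Subgroup F, (K : Set F) = {g : F | a ⊓ g • a ≠ o} ∧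
      ∀ (n : ℕ) (f : Fin (n + 1) → F),
        ((Finset.univ.inf' Finset.univ_nonempty fun i => f i • a) ≠ o ↔
          ∀ i j : Fin (n + 1), (f i)⁻¹ * f j ∈ K) :=
  stmt_18_general F A hA a hgen o ho hmin
end
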